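/- arXiv:math/0407265 — 2 statements merged into one kernel-verified Lean document; each statement's English description precedes it below -/
import Mathlib

section
/- Let n, m, ℓ be nonnegative integers. Then (1-z)^{-ℓ-1} · 2F1(-m, ℓ+1; -n-m; z/(z-1)) = 2F1(-n, ℓ+1; -n-m; z) + (-1)^m (n!(m+ℓ)!/(ℓ!(n+m)!)) · z^{n+m+1}(1-z)^{-m-ℓ-1} · 2F1(-ℓ, n+1; -m-ℓ; 1-z), for all z ∉ {0,1} where defined. -/
/-!
The three terminating series are, up to explicit factors, the residues at `0`, `z` and `1` of the
rational function `x ^ (-n-1) * (x - z) ^ (-m-1) * (x - 1) ^ (-l-1)`, and these residues sum to zero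
because the function is `O(x⁻²)` at infinity. The residue theorem is proved algebraically: the
truncated local expansions at the poles give principal parts whose sum is the partial fraction
decomposition of the function, and comparing the coefficients of top degree in it shows that the
residues sum to zero.
-/

open Finset

noncomputable def poch (x : ℂ) (k : ℕ) : ℂ := (ascPochhammer ℂ k).eval x

/-- Terminating Gauss hypergeometric series `2F1(-n, b; c; z)` as a finite sum. -/
noncomputable def hyp (n : ℕ) (b c : ℂ) (z : ℂ) : ℂ :=
  ∑ k ∈ Finset.range (n + 1),
    poch (-(n : ℂ)) k * poch b k / (poch c k * (Nat.factorial k : ℂ)) * z ^ k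

open Polynomial
open scoped PowerSeries

theorem Polynomial.X_pow_dvd_coe_iff {R : Type*} [Semiring R] {f : R[X]} {n : ℕ} :
    (PowerSeries.X : R⟦X⟧) ^ n ∣ (f : R⟦X⟧) ↔ X ^ n ∣ f := by
  simp only [PowerSeries.X_pow_dvd_iff, Polynomial.X_pow_dvd_iff, Polynomial.coeff_coe]

theorem Polynomial.coeff_taylor_of_natDegree_le {R : Type*} [CommSemiring R] {f : R[X]} {d : ℕ}
    (r : R) (h : f.natDegree ≤ d) : (taylor r f).coeff d = f.coeff d := by
  rcases h.eq_or_lt with rfl | h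
  · rw [coeff_taylor_natDegree, leadingCoeff]
  · rw [coeff_eq_zero_of_natDegree_lt h, coeff_eq_zero_of_natDegree_lt (by rwa [natDegree_taylor])]

namespace PowerSeries

variable {K : Type*} [Field K]

/-- The expansion of `(X - β) ^ (-(d + 1))` at `0`. -/
noncomputable def invXSubCPow (β : K) (d : ℕ) : K⟦X⟧ :=
  mk fun i => (d + i).choose i / ((-β) ^ (d + 1) * β ^ i)

theorem coeff_invXSubCPow (β : K) (d i : ℕ) :
    coeff i (invXSubCPow β d) = (d + i).choose i / ((-β) ^ (d + 1) * β ^ i) :=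
  coeff_mk _ _

theorem coe_X_sub_C_pow_mul_invXSubCPow {β : K} (hβ : β ≠ 0) (d : ℕ) :
    (((Polynomial.X - Polynomial.C β) ^ (d + 1) : K[X]) : K⟦X⟧) * invXSubCPow β d = 1 := by
  have hX :
      ((Polynomial.X - Polynomial.C β : K[X]) : K⟦X⟧) = C (-β) * rescale β⁻¹ (1 - X) := by
    rw [map_sub, map_one, rescale_X, mul_sub, mul_one, ← mul_assoc, ← map_mul,
      neg_mul, mul_inv_cancel₀ hβ, Polynomial.coe_sub, Polynomial.coe_X, Polynomial.coe_C]
    simp only [map_neg, map_one]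
    ring
  have hE : invXSubCPow β d =
      C ((-β) ^ (d + 1))⁻¹ * rescale β⁻¹ (mk fun n => ((d + n).choose d : K)) := by
    ext i
    rw [coeff_invXSubCPow, coeff_C_mul, coeff_rescale, coeff_mk, Nat.choose_symm_add, inv_pow]
    field_simp
  rw [Polynomial.coe_pow, hX, hE, mul_pow, ← map_pow, ← map_pow, mul_mul_mul_comm, ← map_mul,
    mul_inv_cancel₀ (pow_ne_zero _ (neg_ne_zero.2 hβ)), map_one, one_mul, ← map_mul, mul_comm,
    mk_add_choose_mul_one_sub_pow_eq_one, map_one]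

theorem coeff_invXSubCPow_mul_invXSubCPow {β γ : K} (hβ : β ≠ 0) (hγ : γ ≠ 0)
    (N M L : ℕ) :
    coeff N (invXSubCPow β M * invXSubCPow γ L) =
      (∑ j ∈ range (N + 1),
          ((L + j).choose j : K) * ((N + M - j).choose (N - j) : K) * (β / γ) ^ j) /
        ((-β) ^ (M + 1) * (-γ) ^ (L + 1) * β ^ N) := by
  rw [mul_comm, coeff_mul, Nat.sum_antidiagonal_eq_sum_range_succ
    (fun i j => coeff i (invXSubCPow γ L) * coeff j (invXSubCPow β M)), sum_div]
  refine sum_congr rfl fun j hj => ?_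
  have hjN : j ≤ N := Nat.lt_succ_iff.1 (mem_range.1 hj)
  rw [coeff_invXSubCPow, coeff_invXSubCPow, show M + (N - j) = N + M - j by omega,
    show β ^ N = β ^ (N - j) * β ^ j by rw [← pow_add, Nat.sub_add_cancel hjN], div_pow]
  field_simp

end PowerSeries

/-! `p` and `e` describe the rational function `f = ∏ i, (X - p i) ^ (-(e i + 1))`. Its expansion
in powers of `X - p i` is `localExpansion p e i / (X - p i) ^ (e i + 1)`, so its principal part at
`p i` is `principalNumerator p e i / (X - p i) ^ (e i + 1)`. -/
namespace PoleProduct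

variable {K ι : Type*} [Field K] [Fintype ι] [DecidableEq ι] (p : ι → K) (e : ι → ℕ)

noncomputable def cofactor (i : ι) : K[X] :=
  ∏ j ∈ univ.erase i, (X - C (p j)) ^ (e j + 1)

noncomputable def localExpansion (i : ι) : K⟦X⟧ :=
  ∏ j ∈ univ.erase i, PowerSeries.invXSubCPow (p j - p i) (e j)

noncomputable def principalNumerator (i : ι) : K[X] :=
  taylor (-p i) (PowerSeries.trunc (e i + 1) (localExpansion p e i))

noncomputable def residue (i : ι) : K :=
  PowerSeries.coeff (e i) (localExpansion p e i)

theorem coe_taylor_cofactor_mul_localExpansion (hp : Function.Injective p) (i : ι) :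
    ((taylor (p i) (cofactor p e i) : K[X]) : K⟦X⟧) * localExpansion p e i = 1 := by
  have htaylor :
      taylor (p i) (cofactor p e i) = ∏ j ∈ univ.erase i, (X - C (p j - p i)) ^ (e j + 1) := by
    have := map_prod (taylorAlgHom (p i)) (fun j => (X - C (p j)) ^ (e j + 1)) (univ.erase i)
    simp only [taylorAlgHom_apply] at this
    rw [cofactor, this]
    simp [sub_eq_add_neg, add_assoc]
  rw [htaylor, localExpansion, ← Polynomial.coeToPowerSeries.ringHom_apply, map_prod,
    ← prod_mul_distrib]
  exact prod_eq_one fun j hj => PowerSeries.coe_X_sub_C_pow_mul_invXSubCPow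
    (sub_ne_zero.2 (hp.ne (ne_of_mem_erase hj))) _

theorem pow_dvd_one_sub_principalNumerator_mul_cofactor (hp : Function.Injective p) (i : ι) :
    (X - C (p i)) ^ (e i + 1) ∣ 1 - principalNumerator p e i * cofactor p e i := by
  suffices h : X ^ (e i + 1) ∣ taylor (p i) (1 - principalNumerator p e i * cofactor p e i) by
    simpa [taylor_taylor, ← sub_eq_add_neg] using map_dvd (taylorAlgHom (-p i)) h
  set L := localExpansion p e i
  set T := taylor (p i) (cofactor p e i)
  rw [map_sub, taylor_mul, principalNumerator, taylor_taylor, add_neg_cancel, taylor_zero,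
    taylor_one, map_one, ← X_pow_dvd_coe_iff]
  have hTL : (T : K⟦X⟧) * L = 1 := coe_taylor_cofactor_mul_localExpansion p e hp i
  have hsplit : ((1 - PowerSeries.trunc (e i + 1) L * T : K[X]) : K⟦X⟧)
      = (L - PowerSeries.trunc (e i + 1) L) * T := by
    rw [Polynomial.coe_sub, Polynomial.coe_mul, Polynomial.coe_one, ← hTL]
    ring
  rw [hsplit]
  refine dvd_mul_of_dvd_left (PowerSeries.X_pow_dvd_iff.2 fun d hd => ?_) _
  rw [map_sub, Polynomial.coeff_coe, PowerSeries.coeff_trunc, if_pos hd, sub_self]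

theorem natDegree_principalNumerator_le (i : ι) :
    (principalNumerator p e i).natDegree ≤ e i := by
  rw [principalNumerator, natDegree_taylor]
  exact Nat.lt_succ_iff.1 (PowerSeries.natDegree_trunc_lt _ _)

theorem coeff_principalNumerator (i : ι) :
    (principalNumerator p e i).coeff (e i) = residue p e i := by
  rw [principalNumerator, coeff_taylor_of_natDegree_le _
    (Nat.lt_succ_iff.1 (PowerSeries.natDegree_trunc_lt _ _)), PowerSeries.coeff_trunc,
    if_pos (Nat.lt_succ_self _), residue]

theorem monic_cofactor (i : ι) : (cofactor p e i).Monic :=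
  monic_prod_of_monic _ _ fun j _ => (monic_X_sub_C (p j)).pow _

theorem add_one_add_natDegree_cofactor (i : ι) :
    e i + 1 + (cofactor p e i).natDegree = ∑ j, (e j + 1) := by
  rw [cofactor, natDegree_prod_of_monic _ _ fun j _ => (monic_X_sub_C (p j)).pow _]
  simp only [natDegree_pow, natDegree_X_sub_C, mul_one]
  rw [add_sum_erase univ (fun j => e j + 1) (mem_univ i)]

theorem natDegree_principalNumerator_mul_cofactor_lt (i : ι) :
    (principalNumerator p e i * cofactor p e i).natDegree < ∑ j, (e j + 1) := by
  have := natDegree_principalNumerator_le p e i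
  have := add_one_add_natDegree_cofactor p e i
  have := natDegree_mul_le (p := principalNumerator p e i) (q := cofactor p e i)
  omega

/-- Divided by `∏ i, (X - p i) ^ (e i + 1)`, this is the partial fraction decomposition of `f`. -/
theorem sum_principalNumerator_mul_cofactor [Nonempty ι] (hp : Function.Injective p) :
    ∑ i, principalNumerator p e i * cofactor p e i = 1 := by
  set N := ∑ j, (e j + 1)
  have mem_degreeLT_of_natDegree_lt {f : K[X]} (h : f.natDegree < N) : f ∈ degreeLT K N :=
    mem_degreeLT.2 (degree_le_natDegree.trans_lt (by exact_mod_cast h))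
  have hdvd (i : ι) :
      (X - C (p i)) ^ (e i + 1) ∣ 1 - ∑ i, principalNumerator p e i * cofactor p e i := by
    rw [← add_sum_erase _ _ (mem_univ i), ← sub_sub]
    refine dvd_sub (pow_dvd_one_sub_principalNumerator_mul_cofactor p e hp i)
      (dvd_sum fun j hj => dvd_mul_of_dvd_right (dvd_prod_of_mem _ ?_) _)
    exact mem_erase.2 ⟨(ne_of_mem_erase hj).symm, mem_univ _⟩
  have hprod :
      ∏ i, (X - C (p i)) ^ (e i + 1) ∣ 1 - ∑ i, principalNumerator p e i * cofactor p e i :=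
    Fintype.prod_dvd_of_coprime ((pairwise_coprime_X_sub_C hp).mono fun _ _ h => h.pow) hdvd
  have hmem : 1 - ∑ i, principalNumerator p e i * cofactor p e i ∈ degreeLT K N := by
    refine Submodule.sub_mem _ (mem_degreeLT_of_natDegree_lt ?_)
      (Submodule.sum_mem _ fun i _ => mem_degreeLT_of_natDegree_lt
        (natDegree_principalNumerator_mul_cofactor_lt p e i))
    have := add_one_add_natDegree_cofactor p e (Classical.arbitrary ι)
    rw [natDegree_one]
    omega
  have hmonic (j : ι) : ((X - C (p j)) ^ (e j + 1)).Monic := (monic_X_sub_C (p j)).pow _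
  have hdeg : (∏ i, (X - C (p i)) ^ (e i + 1)).degree = (N : WithBot ℕ) := by
    rw [degree_eq_natDegree (monic_prod_of_monic _ _ fun j _ => hmonic j).ne_zero,
      natDegree_prod_of_monic _ _ fun j _ => hmonic j]
    simp [N]
  exact (sub_eq_zero.1 (eq_zero_of_dvd_of_degree_lt hprod (hdeg ▸ mem_degreeLT.1 hmem))).symm

theorem sum_residue_eq_zero (hp : Function.Injective p) (he : 2 ≤ ∑ i, (e i + 1)) :
    ∑ i, residue p e i = 0 := by
  have : Nonempty ι := by
    by_contra h
    rw [not_nonempty_iff] at h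
    simp at he
  have htop (i : ι) :
      (principalNumerator p e i * cofactor p e i).coeff (∑ j, (e j + 1) - 1) = residue p e i := by
    rw [← add_one_add_natDegree_cofactor p e i, show e i + 1 + (cofactor p e i).natDegree - 1
        = e i + (cofactor p e i).natDegree by omega,
      coeff_mul_add_eq_of_natDegree_le (natDegree_principalNumerator_le p e i) le_rfl,
      (monic_cofactor p e i).coeff_natDegree, mul_one, coeff_principalNumerator]
  have h := congrArg (coeff · (∑ j, (e j + 1) - 1)) (sum_principalNumerator_mul_cofactor p e hp)
  simp only [finsetSum_coeff, htop, coeff_one] at h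
  rwa [if_neg (by omega)] at h

end PoleProduct

open PowerSeries in
theorem three_pole_residue_sum {K : Type*} [Field K] {a b c : K} (hab : a ≠ b) (hac : a ≠ c)
    (hbc : b ≠ c) (na nb nc : ℕ) :
    coeff na (invXSubCPow (b - a) nb * invXSubCPow (c - a) nc) +
      coeff nb (invXSubCPow (a - b) na * invXSubCPow (c - b) nc) +
      coeff nc (invXSubCPow (b - c) nb * invXSubCPow (a - c) na) = 0 := by
  have hp : Function.Injective ![a, b, c] := by
    intro i j h
    fin_cases i <;> fin_cases j <;> simp_all [eq_comm]
  have h := PoleProduct.sum_residue_eq_zero ![a, b, c] ![na, nb, nc] hp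
    (by simp [Fin.sum_univ_three]; omega)
  simpa [Fin.sum_univ_three, PoleProduct.residue, PoleProduct.localExpansion,
    show univ.erase (0 : Fin 3) = {1, 2} by decide, show univ.erase (1 : Fin 3) = {0, 2} by decide,
    show univ.erase (2 : Fin 3) = {1, 0} by decide] using h

theorem poch_neg_natCast (N k : ℕ) :
    poch (-(N : ℂ)) k = (-1) ^ k * k.factorial * N.choose k := by
  rw [poch, ascPochhammer_eval_neg_eq_descPochhammer, descPochhammer_eval_eq_descFactorial,
    Nat.descFactorial_eq_factorial_mul_choose]
  push_cast
  ring

theorem poch_natCast_add_one (L k : ℕ) :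
    poch ((L : ℂ) + 1) k = k.factorial * (L + k).choose k := by
  rw [poch, ← Nat.cast_add_one, ascPochhammer_nat_eq_natCast_ascFactorial,
    Nat.ascFactorial_eq_factorial_mul_choose]
  push_cast
  ring

theorem choose_mul_hyp (N M L : ℕ) (w : ℂ) :
    ((N + M).choose N : ℂ) * hyp N ((L : ℂ) + 1) (-(N : ℂ) - M) w =
      ∑ j ∈ range (N + 1),
        ((L + j).choose j : ℂ) * ((N + M - j).choose (N - j) : ℂ) * w ^ j := by
  rw [hyp, mul_sum]
  refine sum_congr rfl fun j hj => ?_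
  have hjN : j ≤ N := Nat.lt_succ_iff.1 (mem_range.1 hj)
  have hchoose :
      ((N + M).choose N : ℂ) * N.choose j = (N + M).choose j * (N + M - j).choose (N - j) := by
    exact_mod_cast Nat.choose_mul hjN
  have hne : ((N + M).choose j : ℂ) ≠ 0 := Nat.cast_ne_zero.2 (Nat.choose_pos (by omega)).ne'
  have hfac : (j.factorial : ℂ) ≠ 0 := Nat.cast_ne_zero.2 j.factorial_ne_zero
  rw [show -(N : ℂ) - M = -((N + M : ℕ) : ℂ) by push_cast; ring, poch_neg_natCast,
    poch_neg_natCast, poch_natCast_add_one]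
  field_simp
  linear_combination ((L + j).choose j : ℂ) * w ^ j * hchoose

open PowerSeries in
theorem coeff_invXSubCPow_mul_invXSubCPow_eq_hyp {β γ : ℂ} (hβ : β ≠ 0) (hγ : γ ≠ 0)
    (N M L : ℕ) :
    coeff N (invXSubCPow β M * invXSubCPow γ L) =
      (N + M).choose N * hyp N ((L : ℂ) + 1) (-(N : ℂ) - M) (β / γ)
        / ((-β) ^ (M + 1) * (-γ) ^ (L + 1) * β ^ N) := by
  rw [coeff_invXSubCPow_mul_invXSubCPow hβ hγ, choose_mul_hyp]

theorem hyp_three_pole_relation {a b c : ℂ} (hab : a ≠ b) (hac : a ≠ c) (hbc : b ≠ c)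
    (na nb nc : ℕ) :
    (na + nb).choose na * hyp na ((nc : ℂ) + 1) (-(na : ℂ) - nb) ((b - a) / (c - a))
        / ((a - b) ^ (nb + 1) * (a - c) ^ (nc + 1) * (b - a) ^ na) +
      (nb + na).choose nb * hyp nb ((nc : ℂ) + 1) (-(nb : ℂ) - na) ((a - b) / (c - b))
        / ((b - a) ^ (na + 1) * (b - c) ^ (nc + 1) * (a - b) ^ nb) +
      (nc + nb).choose nc * hyp nc ((na : ℂ) + 1) (-(nc : ℂ) - nb) ((b - c) / (a - c))
        / ((c - b) ^ (nb + 1) * (c - a) ^ (na + 1) * (b - c) ^ nc) = 0 := by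
  have h := three_pole_residue_sum hab hac hbc na nb nc
  rwa [coeff_invXSubCPow_mul_invXSubCPow_eq_hyp (sub_ne_zero.2 hab.symm) (sub_ne_zero.2 hac.symm),
    coeff_invXSubCPow_mul_invXSubCPow_eq_hyp (sub_ne_zero.2 hab) (sub_ne_zero.2 hbc.symm),
    coeff_invXSubCPow_mul_invXSubCPow_eq_hyp (sub_ne_zero.2 hbc) (sub_ne_zero.2 hac),
    neg_sub, neg_sub, neg_sub, neg_sub, neg_sub, neg_sub] at h

theorem trivial_monodromy_connection (n m l : ℕ) (z : ℂ) (hz0 : z ≠ 0) (hz1 : z ≠ 1) :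
    (1 - z) ^ (-(l : ℤ) - 1) * hyp m ((l : ℂ) + 1) (-(n : ℂ) - m) (z / (z - 1)) =
      hyp n ((l : ℂ) + 1) (-(n : ℂ) - m) z +
      (-1) ^ m * ((Nat.factorial n : ℂ) * (Nat.factorial (m + l) : ℂ) /
          ((Nat.factorial l : ℂ) * (Nat.factorial (n + m) : ℂ))) *
        (z ^ (n + m + 1) * (1 - z) ^ (-(m : ℤ) - l - 1)) *
        hyp l ((n : ℂ) + 1) (-(m : ℂ) - l) (1 - z) := by
  have hc : ((n + m).choose n : ℂ) ≠ 0 := Nat.cast_ne_zero.2 (Nat.choose_pos (by omega)).ne'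
  have hratio : (n.factorial * (m + l).factorial : ℂ) / (l.factorial * (n + m).factorial) =
      (l + m).choose l / (n + m).choose n := by
    have := Nat.cast_ne_zero (R := ℂ) |>.2 m.factorial_ne_zero
    rw [Nat.cast_add_choose, Nat.cast_add_choose, add_comm m l]
    field_simp
  have h := hyp_three_pole_relation hz0.symm zero_ne_one hz1 n m l
  simp only [sub_zero, zero_sub, div_one, one_pow, mul_one] at h
  rw [show -z / (1 - z) = z / (z - 1) by field_simp; ring, show (z - 1) / -1 = 1 - z by ring,
    show -(m : ℂ) - n = -n - m by ring, show -(l : ℂ) - m = -m - l by ring,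
    show (m + n).choose m = (n + m).choose n by rw [Nat.choose_symm_add, add_comm]] at h
  rw [show -(l : ℤ) - 1 = -((l + 1 : ℕ) : ℤ) by push_cast; ring,
    show -(m : ℤ) - l - 1 = -((m + l + 1 : ℕ) : ℤ) by push_cast; ring, zpow_neg, zpow_natCast,
    zpow_neg, zpow_natCast, hratio]
  rw [show z - 1 = -(1 - z) by ring] at h ⊢
  simp only [neg_pow (1 - z), neg_pow z, pow_succ (-1 : ℂ)] at h
  field_simp at h ⊢
  -- after clearing denominators, `h` is the goal multiplied by `-z ^ (n + m + 1)`
  apply mul_left_cancel₀ (pow_ne_zero (n + m + 1) hz0)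
  linear_combination -h
end

section
/- Let n, m, ℓ be nonnegative integers. Then 2F1(-n, ℓ+1; -n-m; z) = (m!(n+m+ℓ+1)!/((n+m)!(m+ℓ+1)!)) · 2F1(-n, ℓ+1; 2+m+ℓ; 1-z), as polynomials in z. -/
open Finset

/-!
Both sides are polynomials in `z`, so it suffices to expand `(1 - z)^k` binomially and compare
coefficients. The coefficient of `z^j` on the right is itself a terminating `2F1` at `1`, with the
parameters shifted by `j`, which the Chu–Vandermonde identity evaluates as a ratio of Pochhammer
symbols; the reflection `(x)_k = (-1)^k (1 - x - k)_k` then turns that ratio into the coefficient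
on the left. This is the classical connection formula between `2F1(-n, b; c; 1 - z)` and
`2F1(-n, b; b - c - n + 1; z)`, here with `b = ℓ + 1`, `c = 2 + m + ℓ`.
-/

open Polynomial

lemma poch_add (x : ℂ) (j i : ℕ) : poch x (j + i) = poch x j * poch (x + j) i := by
  simp [poch, ← ascPochhammer_mul, eval_comp]

lemma poch_eq_mul_poch_of_le (x : ℂ) {i N : ℕ} (h : i ≤ N) :
    poch x N = poch x i * poch (x + i) (N - i) := by
  rw [← poch_add, Nat.add_sub_cancel' h]

lemma poch_eq_neg_one_pow_mul (x : ℂ) (k : ℕ) : poch x k = (-1) ^ k * poch (1 - x - k) k := by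
  rw [poch, poch, ← neg_neg x, ascPochhammer_eval_neg_eq_descPochhammer,
    descPochhammer_eval_eq_ascPochhammer]
  ring_nf

lemma poch_neg_natCast_div_factorial (N i : ℕ) :
    poch (-(N : ℂ)) i / i.factorial = (-1) ^ i * N.choose i := by
  rw [poch, ascPochhammer_eval_neg_eq_descPochhammer, descPochhammer_eval_eq_descFactorial,
    Nat.descFactorial_eq_factorial_mul_choose]
  push_cast
  rw [mul_left_comm, mul_div_cancel_left₀ _ (Nat.cast_ne_zero.2 i.factorial_ne_zero)]

lemma poch_natCast_add_one_s14 (a k : ℕ) :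
    poch ((a : ℂ) + 1) k = (a + k).factorial / a.factorial := by
  rw [eq_div_iff (Nat.cast_ne_zero.2 a.factorial_ne_zero), poch, ← Nat.cast_succ,
    ← Nat.cast_ascFactorial, ← Nat.factorial_mul_ascFactorial, Nat.cast_mul, mul_comm]

lemma poch_natCast_add_one_ne_zero (a k : ℕ) : poch ((a : ℂ) + 1) k ≠ 0 := by
  rw [poch_natCast_add_one_s14]
  exact div_ne_zero (Nat.cast_ne_zero.2 (Nat.factorial_ne_zero _))
    (Nat.cast_ne_zero.2 (Nat.factorial_ne_zero _))

lemma descPochhammer_smeval_eq_poch (r : ℂ) (k : ℕ) :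
    (descPochhammer ℤ k).smeval r = poch (r - k + 1) k := by
  rw [← aeval_eq_smeval, aeval_def, ← eval_map, descPochhammer_map,
    descPochhammer_eval_eq_ascPochhammer, poch]

/-- Chu–Vandermonde: `Ring.descPochhammer_smeval_add` at `r = -b`, `s = c + N - 1`. -/
theorem sum_neg_one_pow_mul_choose_mul_poch (N : ℕ) (b c : ℂ) :
    ∑ i ∈ range (N + 1), (-1) ^ i * N.choose i * (poch b i * poch (c + i) (N - i)) =
      poch (c - b) N := by
  have h := Ring.descPochhammer_smeval_add N (Commute.all (-b) (c + N - 1))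
  rw [Nat.sum_antidiagonal_eq_sum_range_succ_mk] at h
  simp only [descPochhammer_smeval_eq_poch] at h
  rw [show -b + (c + N - 1) - N + 1 = c - b by ring] at h
  rw [h]
  refine sum_congr rfl fun i hi => ?_
  have hiN : i ≤ N := Nat.lt_succ_iff.mp (mem_range.mp hi)
  rw [poch_eq_neg_one_pow_mul b i, Nat.cast_sub hiN, show -b - i + 1 = 1 - b - i by ring,
    show c + N - 1 - (N - i) + 1 = c + i by ring]
  have h_sq : ((-1 : ℂ) ^ i) ^ 2 = 1 := by rw [← pow_mul, pow_mul', neg_one_sq, one_pow]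
  linear_combination (N.choose i * poch (1 - b - i) i * poch (c + i) (N - i)) * h_sq

theorem hyp_one {N : ℕ} (b : ℂ) {c : ℂ} (hc : poch c N ≠ 0) :
    hyp N b c 1 = poch (c - b) N / poch c N := by
  rw [eq_div_iff hc, hyp, sum_mul, ← sum_neg_one_pow_mul_choose_mul_poch]
  refine sum_congr rfl fun i hi => ?_
  have hc_split := poch_eq_mul_poch_of_le c (Nat.lt_succ_iff.mp (mem_range.mp hi))
  rw [hc_split] at hc ⊢
  rw [← poch_neg_natCast_div_factorial, one_pow, mul_one]
  field_simp [left_ne_zero_of_mul hc]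

theorem hyp_one_sub (n : ℕ) (b c z : ℂ) :
    hyp n b c (1 - z) = ∑ j ∈ range (n + 1),
      (-1) ^ j * (poch (-(n : ℂ)) j * poch b j / (poch c j * j.factorial)) *
        hyp (n - j) (b + j) (c + j) 1 * z ^ j := by
  have h_expand : hyp n b c (1 - z) = ∑ k ∈ range (n + 1), ∑ j ∈ range (k + 1),
      poch (-(n : ℂ)) k * poch b k / (poch c k * k.factorial) * (k.choose j * (-z) ^ j) := by
    refine sum_congr rfl fun k _ => ?_
    rw [sub_eq_neg_add, add_pow, mul_sum]
    simp only [one_pow, mul_one, mul_comm]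
  rw [h_expand, sum_comm' (t' := range (n + 1)) (s' := fun j => Ico j (n + 1))
    (fun k j => by simp only [mem_range, mem_Ico]; omega)]
  refine sum_congr rfl fun j hj => ?_
  have hjn : j ≤ n := Nat.lt_succ_iff.mp (mem_range.mp hj)
  rw [sum_Ico_eq_sum_range, show n + 1 - j = n - j + 1 by omega, hyp, mul_sum, sum_mul]
  refine sum_congr rfl fun i _ => ?_
  have h_fac : ((j + i).factorial : ℂ) = (j + i).choose j * j.factorial * i.factorial := by
    norm_cast
    rw [add_comm j i, ← Nat.add_choose_mul_factorial_mul_factorial i j]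
    ring
  have h_choose : ((j + i).choose j : ℂ) ≠ 0 := Nat.cast_ne_zero.2 (Nat.choose_pos (by omega)).ne'
  rw [poch_add, poch_add, poch_add, h_fac, Nat.cast_sub hjn, neg_sub', sub_neg_eq_add,
    neg_pow, one_pow]
  field_simp

theorem hyp_eq_poch_div_poch_mul_hyp_one_sub {n : ℕ} {b c : ℂ} (hc : poch c n ≠ 0)
    (hcb : poch (c - b) n ≠ 0) (z : ℂ) :
    hyp n b (b - c - n + 1) z = poch c n / poch (c - b) n * hyp n b c (1 - z) := by
  rw [hyp_one_sub, mul_sum, hyp]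
  refine sum_congr rfl fun j hj => ?_
  have hjn : j ≤ n := Nat.lt_succ_iff.mp (mem_range.mp hj)
  have hc_split := poch_eq_mul_poch_of_le c hjn
  have hcb_split := poch_eq_mul_poch_of_le (c - b) (Nat.sub_le n j)
  rw [Nat.sub_sub_self hjn, poch_eq_neg_one_pow_mul (c - b + _),
    show 1 - (c - b + ((n - j : ℕ) : ℂ)) - j = b - c - n + 1 by push_cast [hjn]; ring]
    at hcb_split
  rw [hc_split] at hc ⊢
  rw [hcb_split] at hcb ⊢
  have hc_head := left_ne_zero_of_mul hc
  have hc_tail := right_ne_zero_of_mul hc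
  rw [hyp_one (b + j) hc_tail, add_sub_add_right_eq_sub]
  have hcb_head := left_ne_zero_of_mul hcb
  have h_denom := right_ne_zero_of_mul (right_ne_zero_of_mul hcb)
  field_simp

theorem rational_solution_transform_at_one (n m l : ℕ) (z : ℂ) :
    hyp n ((l : ℂ) + 1) (-(n : ℂ) - m) z =
      (Nat.factorial m : ℂ) * (Nat.factorial (n + m + l + 1) : ℂ) /
          ((Nat.factorial (n + m) : ℂ) * (Nat.factorial (m + l + 1) : ℂ)) *
        hyp n ((l : ℂ) + 1) (2 + m + l) (1 - z) := by
  have hc : (2 + m + l : ℂ) = ((m + l + 1 : ℕ) : ℂ) + 1 := by push_cast; ring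
  have hcb : (2 + m + l : ℂ) - (l + 1) = (m : ℂ) + 1 := by ring
  rw [show -(n : ℂ) - m = (l + 1) - (2 + m + l) - n + 1 by ring,
    hyp_eq_poch_div_poch_mul_hyp_one_sub (hc ▸ poch_natCast_add_one_ne_zero _ _)
      (hcb ▸ poch_natCast_add_one_ne_zero _ _)]
  congr 1
  rw [hcb, hc, poch_natCast_add_one_s14, poch_natCast_add_one_s14,
    show m + l + 1 + n = n + m + l + 1 by ring, add_comm m n]
  field_simp
end
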